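/- arXiv:2001.09012 — 3 statements merged into one kernel-verified Lean document; each statement's English description precedes it below -/
import Mathlib

section
/- Let v be a vertex of eccentricity r in a connected graph G of order n, and suppose the distance level sizes n_i = |N_i(v)| satisfy: n_0 = 1, n_1 ≥ 3, n_2 ≥ 4, n_3 ≥ 4, n_i ≥ 6 for 4 ≤ i ≤ r−4, n_{r-3} ≥ 4, n_{r-2} ≥ 4, n_{r-1} ≥ 3, n_r ≥ 1, and Σ_{i=0}^r n_i = n. Then the total distance σ(v) = Σ_{i=0}^r i·n_i satisfies σ(v) ≤ (n² + 18n + 81)/12. -/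
open SimpleGraph Finset

/-- The eccentricity of a vertex: the maximum distance from `v` to any vertex. -/
noncomputable def SimpleGraph.ecc {V : Type*} [Fintype V] (G : SimpleGraph V) (v : V) : ℕ :=
  Finset.univ.sup (fun u => G.dist v u)

/-- `n_i(v)`: the number of vertices at distance exactly `i` from `v`. -/
noncomputable def SimpleGraph.nLevel {V : Type*} [Fintype V] (G : SimpleGraph V) (v : V) (i : ℕ) : ℕ :=
  (Finset.univ.filter (fun u => G.dist v u = i)).card

/-- The proximity of `G`: the minimum over all vertices of the average distance
to the other vertices. -/
noncomputable def SimpleGraph.proximity {V : Type*} [Fintype V] [Nonempty V]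
    (G : SimpleGraph V) : ℚ :=
  Finset.univ.inf' Finset.univ_nonempty
    (fun v => (∑ u, (G.dist v u : ℚ)) / ((Fintype.card V : ℚ) - 1))

/-- A combinatorial plane embedding of a graph: a collection of faces, each a cycle,
such that every edge lies on exactly two faces, satisfying Euler's formula. -/
structure PlaneEmbedding {V : Type*} [Fintype V] [DecidableEq V] (G : SimpleGraph V)
    [DecidableRel G.Adj] where
  faces : Set ((v : V) × G.Walk v v)
  finite : faces.Finite
  isCycle : ∀ f ∈ faces, f.2.IsCycle
  edge_two_faces : ∀ e ∈ G.edgeSet, ∃ f ∈ faces, ∃ g ∈ faces, f ≠ g ∧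
    e ∈ f.2.edges ∧ e ∈ g.2.edges ∧ ∀ h ∈ faces, e ∈ h.2.edges → h = f ∨ h = g
  euler : (Fintype.card V : ℤ) - (G.edgeFinset.card : ℤ) + (finite.toFinset.card : ℤ) = 2

/-- A quadrangulation: a connected bipartite plane graph all of whose faces have length 4. -/
def PlaneEmbedding.IsQuadrangulation {V : Type*} [Fintype V] [DecidableEq V]
    {G : SimpleGraph V} [DecidableRel G.Adj] (P : PlaneEmbedding G) : Prop :=
  G.Connected ∧ G.Colorable 2 ∧ ∀ f ∈ P.faces, f.2.length = 4

/-- A triangulation (maximal planar graph): a connected plane graph all of whose faces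
have length 3. -/
def PlaneEmbedding.IsTriangulation {V : Type*} [Fintype V] [DecidableEq V]
    {G : SimpleGraph V} [DecidableRel G.Adj] (P : PlaneEmbedding G) : Prop :=
  G.Connected ∧ ∀ f ∈ P.faces, f.2.length = 3

/-- `G` is `k`-connected: it has more than `k` vertices and removing any fewer than `k`
vertices leaves a connected graph. -/
def SimpleGraph.IsKConnected {V : Type*} [Fintype V] [DecidableEq V] (G : SimpleGraph V)
    (k : ℕ) : Prop :=
  k < Fintype.card V ∧
    ∀ s : Finset V, s.card < k → ((⊤ : G.Subgraph).deleteVerts ↑s).coe.Connected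


lemma key_aux (r : ℕ) (a : ℕ → ℚ) (ha : ∀ i, 0 ≤ a i)
    (h0 : a 0 = 1) (h1 : 3 ≤ a 1) (h2 : 4 ≤ a 2) (h3 : 4 ≤ a 3)
    (hmid : ∀ i, 4 ≤ i → i ≤ r - 4 → 6 ≤ a i)
    (hr3 : 4 ≤ a (r-3)) (hr2 : 4 ≤ a (r-2)) (hr1 : 3 ≤ a (r-1)) (hrr : 1 ≤ a r)
    (hr4 : 4 ≤ r) :
    3*(r:ℚ)^2 - 9*r ≤ ∑ i ∈ Finset.range (r+1), ((r:ℚ) - i) * a i := by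
  rcases le_or_gt r 7 with h7 | h8
  · interval_cases r <;>
      (norm_num [Finset.sum_range_succ] at * <;> nlinarith [ha 0, ha 1, ha 2, ha 3, ha 4, ha 5, ha 6, ha 7])
  · obtain ⟨s, rfl⟩ : ∃ s, r = s + 8 := ⟨r - 8, by omega⟩
    have hpeel : ∑ i ∈ Finset.range (s+8+1), (((s+8:ℕ):ℚ) - i) * a i
        = (∑ i ∈ Finset.range (s+5), (((s+8:ℕ):ℚ) - i) * a i)
          + (((s+8:ℕ):ℚ) - (s+5)) * a (s+5) + (((s+8:ℕ):ℚ) - (s+6)) * a (s+6)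
          + (((s+8:ℕ):ℚ) - (s+7)) * a (s+7) + (((s+8:ℕ):ℚ) - (s+8)) * a (s+8) := by
      rw [Finset.sum_range_succ, Finset.sum_range_succ, Finset.sum_range_succ,
        Finset.sum_range_succ]
      push_cast
      ring
    have hsplit : ∑ i ∈ Finset.range (s+5), (((s+8:ℕ):ℚ) - i) * a i
        = (∑ i ∈ Finset.range 4, (((s+8:ℕ):ℚ) - i) * a i)
          + ∑ i ∈ Finset.Ico 4 (s+5), (((s+8:ℕ):ℚ) - i) * a i := by
      simp only [Finset.range_eq_Ico]
      exact (Finset.sum_Ico_consecutive (fun i => (((s+8:ℕ):ℚ) - i) * a i)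
        (by omega) (by omega)).symm
    have hn : (∑ i ∈ Finset.range (s+1), i) * 2 = (s+1) * s := by
      simpa using Finset.sum_range_id_mul_two (s+1)
    have hgauss : (∑ k ∈ Finset.range (s+1), (k:ℚ)) * 2 = ((s:ℚ)+1)*s := by
      rw [← Nat.cast_sum]
      exact_mod_cast hn
    have hmidsum : 3*(s:ℚ)^2 + 27*s + 24
        ≤ ∑ i ∈ Finset.Ico 4 (s+5), (((s+8:ℕ):ℚ) - i) * a i := by
      have step : ∀ i ∈ Finset.Ico 4 (s+5),
          (((s+8:ℕ):ℚ) - i) * 6 ≤ (((s+8:ℕ):ℚ) - i) * a i := by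
        intro i hi
        rw [Finset.mem_Ico] at hi
        have h6 : 6 ≤ a i := hmid i hi.1 (by omega)
        have hnn : (0:ℚ) ≤ ((s+8:ℕ):ℚ) - i := by
          have : (i:ℚ) ≤ ((s+8:ℕ):ℚ) := by exact_mod_cast (by omega : i ≤ s + 8)
          linarith
        nlinarith
      calc 3*(s:ℚ)^2 + 27*s + 24
          = ∑ k ∈ Finset.range (s+1), ((((s:ℚ)+8) - 4)*6 - 6*(k:ℚ)) := by
            rw [Finset.sum_sub_distrib, Finset.sum_const, Finset.card_range,
              ← Finset.mul_sum, nsmul_eq_mul]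
            push_cast
            nlinarith [hgauss]
        _ = ∑ i ∈ Finset.Ico 4 (s+5), (((s+8:ℕ):ℚ) - i) * 6 := by
            rw [Finset.sum_Ico_eq_sum_range, show (s+5) - 4 = s + 1 from by omega]
            exact Finset.sum_congr rfl fun k _ => by push_cast; ring
        _ ≤ _ := Finset.sum_le_sum step
    have hbot : 12*(s:ℚ) + 73 ≤ ∑ i ∈ Finset.range 4, (((s+8:ℕ):ℚ) - i) * a i := by
      rw [show (4:ℕ) = 3+1 from rfl, Finset.sum_range_succ, Finset.sum_range_succ,
        Finset.sum_range_succ, Finset.sum_range_succ, Finset.sum_range_zero]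
      push_cast
      rw [h0]
      have p1 : (0:ℚ) ≤ ((s:ℚ)+7) * (a 1 - 3) :=
        mul_nonneg (by positivity) (by linarith only [h1])
      have p2 : (0:ℚ) ≤ ((s:ℚ)+6) * (a 2 - 4) :=
        mul_nonneg (by positivity) (by linarith only [h2])
      have p3 : (0:ℚ) ≤ ((s:ℚ)+5) * (a 3 - 4) :=
        mul_nonneg (by positivity) (by linarith only [h3])
      linarith only [p1, p2, p3]
    have e3 : s + 8 - 3 = s + 5 := by omega
    have e2 : s + 8 - 2 = s + 6 := by omega
    have e1 : s + 8 - 1 = s + 7 := by omega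
    rw [e3] at hr3; rw [e2] at hr2; rw [e1] at hr1
    have t5 : (12:ℚ) ≤ (((s+8:ℕ):ℚ) - (s+5)) * a (s+5) := by
      have hc : (((s+8:ℕ):ℚ) - ((s:ℚ)+5)) = 3 := by push_cast; ring
      rw [hc]; linarith
    have t6 : (8:ℚ) ≤ (((s+8:ℕ):ℚ) - (s+6)) * a (s+6) := by
      have hc : (((s+8:ℕ):ℚ) - ((s:ℚ)+6)) = 2 := by push_cast; ring
      rw [hc]; linarith
    have t7 : (3:ℚ) ≤ (((s+8:ℕ):ℚ) - (s+7)) * a (s+7) := by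
      have hc : (((s+8:ℕ):ℚ) - ((s:ℚ)+7)) = 1 := by push_cast; ring
      rw [hc]; linarith
    have t8 : (0:ℚ) ≤ (((s+8:ℕ):ℚ) - (s+8)) * a (s+8) := by
      have hc : (((s+8:ℕ):ℚ) - ((s:ℚ)+8)) = 0 := by push_cast; ring
      rw [hc]; simp
    rw [hpeel, hsplit]
    have hc2 : ((s+8:ℕ):ℚ) = (s:ℚ) + 8 := by push_cast; ring
    rw [hc2] at hmidsum hbot t5 t6 t7 t8 ⊢
    linarith only [hmidsum, hbot, t5, t6, t7, t8]

/-- If the distance-level sizes from a vertex `v` of eccentricity `r` satisfy the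
stated lower bounds, then the total distance of `v` is at most `(n² + 18n + 81)/12`. -/
theorem stmt_3 {V : Type*} [Fintype V] (G : SimpleGraph V) (hG : G.Connected)
    (v : V) (r n : ℕ) (hr : G.ecc v = r) (hn : Fintype.card V = n)
    (h0 : G.nLevel v 0 = 1) (h1 : 3 ≤ G.nLevel v 1) (h2 : 4 ≤ G.nLevel v 2)
    (h3 : 4 ≤ G.nLevel v 3)
    (hmid : ∀ i : ℕ, 4 ≤ i → i ≤ r - 4 → 6 ≤ G.nLevel v i)
    (hr3 : 4 ≤ G.nLevel v (r - 3)) (hr2 : 4 ≤ G.nLevel v (r - 2))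
    (hr1 : 3 ≤ G.nLevel v (r - 1)) (hrr : 1 ≤ G.nLevel v r)
    (hsum : ∑ i ∈ Finset.range (r + 1), G.nLevel v i = n) :
    (∑ u, (G.dist v u : ℚ)) ≤ ((n : ℚ) ^ 2 + 18 * n + 81) / 12 := by
  have hr4 : 4 ≤ r := by
    by_contra h
    push_neg at h
    interval_cases r <;> simp_all
  have hdist : ∀ u : V, G.dist v u ∈ Finset.range (r+1) := by
    intro u
    rw [Finset.mem_range, Nat.lt_succ_iff, ← hr]
    exact Finset.le_sup (Finset.mem_univ u)
  have hA : (∑ u, (G.dist v u : ℚ)) = ∑ i ∈ Finset.range (r+1), (i:ℚ) * (G.nLevel v i : ℚ) := by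
    rw [← Finset.sum_fiberwise_of_maps_to (g := fun u => G.dist v u) (t := Finset.range (r+1)) (fun u _ => hdist u) (fun u => (G.dist v u : ℚ))]
    refine Finset.sum_congr rfl fun i _ => ?_
    have : ∀ u ∈ Finset.univ.filter (fun u => G.dist v u = i), (G.dist v u : ℚ) = (i:ℚ) := by
      intro u hu
      rw [Finset.mem_filter] at hu
      exact_mod_cast hu.2
    rw [Finset.sum_congr rfl this, Finset.sum_const, nsmul_eq_mul, SimpleGraph.nLevel, mul_comm]
  rw [hA]
  have hsumQ : ∑ i ∈ Finset.range (r+1), ((G.nLevel v i : ℚ)) = (n:ℚ) := by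
    exact_mod_cast hsum
  have hkey : 3*(r:ℚ)^2 - 9*(r:ℚ) ≤ ∑ i ∈ Finset.range (r+1), ((r:ℚ) - i) * (G.nLevel v i : ℚ) :=
    key_aux r (fun i => (G.nLevel v i : ℚ)) (fun i => by positivity)
    (show ((G.nLevel v 0 : ℚ)) = 1 by exact_mod_cast h0)
    (show (3:ℚ) ≤ (G.nLevel v 1 : ℚ) by exact_mod_cast h1)
    (show (4:ℚ) ≤ (G.nLevel v 2 : ℚ) by exact_mod_cast h2)
    (show (4:ℚ) ≤ (G.nLevel v 3 : ℚ) by exact_mod_cast h3)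
    (fun i hi hi' => show (6:ℚ) ≤ (G.nLevel v i : ℚ) by exact_mod_cast hmid i hi hi')
    (show (4:ℚ) ≤ (G.nLevel v (r-3) : ℚ) by exact_mod_cast hr3)
    (show (4:ℚ) ≤ (G.nLevel v (r-2) : ℚ) by exact_mod_cast hr2)
    (show (3:ℚ) ≤ (G.nLevel v (r-1) : ℚ) by exact_mod_cast hr1)
    (show (1:ℚ) ≤ (G.nLevel v r : ℚ) by exact_mod_cast hrr) hr4
  have hsub : ∑ i ∈ Finset.range (r+1), ((r:ℚ) - i) * (G.nLevel v i : ℚ)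
      = (r:ℚ) * n - ∑ i ∈ Finset.range (r+1), (i:ℚ) * (G.nLevel v i : ℚ) := by
    simp only [sub_mul]
    rw [Finset.sum_sub_distrib, ← Finset.mul_sum, hsumQ]
  rw [hsub] at hkey
  nlinarith [hkey, sq_nonneg ((n:ℚ) + 9 - 6*(r:ℚ))]
end

section
/- Let v be a vertex of eccentricity r in a connected graph G of order n, and suppose n_0 = 1, n_i ≥ 2 for i ∈ {1,2,r−2,r−1}, n_i ≥ 4 for 3 ≤ i ≤ r−3, and n_r ≥ 1, with Σ_{i=0}^r n_i = n. Then σ(v) = Σ_{i=0}^r i·n_i ≤ (n² + 10n + 25)/8. -/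
open SimpleGraph Finset

/-!
Since every level index is at most `r`, `σ(v) = r·n − Σᵢ (r − i)·nᵢ`. The level bounds give
`Σᵢ (r − i)·nᵢ ≥ 2r² − 5r` (with equality for the extremal profile when `r ≥ 5`), hence
`8σ(v) ≤ 8rn − 16r² + 40r = (n + 5)² − (n + 5 − 4r)² ≤ (n + 5)²`.
-/

lemma two_mul_sum_range_add_three (k : ℕ) :
    2 * ∑ x ∈ range k, (x + 3) = k * (k + 5) := by
  induction k with
  | zero => simp
  | succ k ih => rw [sum_range_succ, mul_add, ih]; ring

lemma sum_range_sub_mul_add_sum_range_mul (m : ℕ → ℕ) (r : ℕ) :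
    ∑ i ∈ range (r + 1), (r - i) * m i + ∑ i ∈ range (r + 1), i * m i =
      r * ∑ i ∈ range (r + 1), m i := by
  rw [← sum_add_distrib, mul_sum]
  refine sum_congr rfl fun i hi => ?_
  rw [← add_mul, Nat.sub_add_cancel (Nat.lt_succ_iff.mp (mem_range.mp hi))]

lemma two_mul_sq_le_sum_range_sub_mul (m : ℕ → ℕ) (r : ℕ) (h0 : 1 ≤ m 0) (h1 : 2 ≤ m 1)
    (h2 : 2 ≤ m 2) (hr2 : 2 ≤ m (r - 2)) (hr1 : 2 ≤ m (r - 1))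
    (hmid : ∀ i, 3 ≤ i → i ≤ r - 3 → 4 ≤ m i) :
    2 * r ^ 2 ≤ ∑ i ∈ range (r + 1), (r - i) * m i + 5 * r := by
  obtain hr | hr := le_or_gt r 4
  · interval_cases r <;> simp only [sum_range_succ, sum_range_zero] at * <;> omega
  obtain ⟨k, rfl⟩ : ∃ k, r = k + 5 := ⟨r - 5, by omega⟩
  have hmiddle : 4 * ∑ x ∈ range k, (x + 3) ≤ ∑ x ∈ range k, (k + 5 - (3 + x)) * m (3 + x) := by
    rw [mul_sum, ← sum_range_reflect]
    refine sum_le_sum fun x hx => ?_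
    have hx := mem_range.mp hx
    rw [show k - 1 - x + 3 = k + 5 - (3 + x) by omega, mul_comm]
    exact Nat.mul_le_mul_left _ (hmid _ (by omega) (by omega))
  have hgauss := two_mul_sum_range_add_three k
  -- levels `0, 1, 2 | 3, …, k + 2 | k + 3, k + 4, k + 5`
  rw [show k + 5 + 1 = 3 + k + 3 by ring, sum_range_succ, sum_range_succ, sum_range_succ,
    sum_range_add, show 3 + k + 2 = k + 5 by ring, show 3 + k + 1 = k + 4 by ring, add_comm 3 k]
  simp only [sum_range_succ, sum_range_zero, Nat.add_sub_add_left, Nat.reduceSub, Nat.sub_zero,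
    show k + 5 - 2 = k + 3 by omega, show k + 5 - 1 = k + 4 by omega] at hr2 hr1 ⊢
  nlinarith [Nat.mul_le_mul_left (k + 5) h0, Nat.mul_le_mul_left (k + 4) h1,
    Nat.mul_le_mul_left (k + 3) h2]

lemma eight_mul_sum_range_mul_le_sq (m : ℕ → ℕ) (r : ℕ) (h0 : 1 ≤ m 0) (h1 : 2 ≤ m 1)
    (h2 : 2 ≤ m 2) (hr2 : 2 ≤ m (r - 2)) (hr1 : 2 ≤ m (r - 1))
    (hmid : ∀ i, 3 ≤ i → i ≤ r - 3 → 4 ≤ m i) :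
    8 * ∑ i ∈ range (r + 1), i * m i ≤ (∑ i ∈ range (r + 1), m i + 5) ^ 2 := by
  have hsplit := sum_range_sub_mul_add_sum_range_mul m r
  have hlower := two_mul_sq_le_sum_range_sub_mul m r h0 h1 h2 hr2 hr1 hmid
  zify at hsplit hlower ⊢
  nlinarith [sq_nonneg ((∑ i ∈ range (r + 1), (m i : ℤ)) + 5 - 4 * r)]

namespace SimpleGraph

variable {V : Type*} [Fintype V] (G : SimpleGraph V) (v : V)

lemma dist_le_ecc (u : V) : G.dist v u ≤ G.ecc v :=
  le_sup (f := G.dist v) (mem_univ u)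

lemma sum_dist_eq_sum_range_mul_nLevel :
    ∑ u, G.dist v u = ∑ i ∈ range (G.ecc v + 1), i * G.nLevel v i := by
  classical
  rw [← sum_fiberwise_of_maps_to (g := G.dist v)
    fun u _ => mem_range.mpr (Nat.lt_succ_of_le (G.dist_le_ecc v u))]
  refine sum_congr rfl fun i _ => ?_
  rw [sum_congr rfl fun u hu => (mem_filter.mp hu).2, sum_const, smul_eq_mul, mul_comm, nLevel]

end SimpleGraph

theorem stmt_11_general {V : Type*} [Fintype V] (G : SimpleGraph V)
    (v : V) (r n : ℕ) (hr : G.ecc v = r)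
    (h0 : G.nLevel v 0 = 1)
    (hlow : ∀ i ∈ ({1, 2, r - 2, r - 1} : Set ℕ), 2 ≤ G.nLevel v i)
    (hmid : ∀ i : ℕ, 3 ≤ i → i ≤ r - 3 → 4 ≤ G.nLevel v i)
    (hsum : ∑ i ∈ Finset.range (r + 1), G.nLevel v i = n) :
    (∑ u, (G.dist v u : ℚ)) ≤ ((n : ℚ) ^ 2 + 10 * n + 25) / 8 := by
  have key := eight_mul_sum_range_mul_le_sq (G.nLevel v) r h0.ge (hlow 1 (by simp))
    (hlow 2 (by simp)) (hlow (r - 2) (by simp)) (hlow (r - 1) (by simp)) hmid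
  rw [hsum, ← hr, ← G.sum_dist_eq_sum_range_mul_nLevel v] at key
  rw [le_div_iff₀ (by norm_num), ← Nat.cast_sum]
  exact_mod_cast (by linarith : (∑ u, G.dist v u) * 8 ≤ n ^ 2 + 10 * n + 25)

/-- Counting step for quadrangulations: level-size lower bounds imply
`σ(v) ≤ (n² + 10n + 25)/8`. -/
theorem stmt_11 {V : Type*} [Fintype V] (G : SimpleGraph V) (hG : G.Connected)
    (v : V) (r n : ℕ) (hr : G.ecc v = r) (hn : Fintype.card V = n)
    (h0 : G.nLevel v 0 = 1)
    (hlow : ∀ i ∈ ({1, 2, r - 2, r - 1} : Set ℕ), 2 ≤ G.nLevel v i)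
    (hmid : ∀ i : ℕ, 3 ≤ i → i ≤ r - 3 → 4 ≤ G.nLevel v i)
    (hrr : 1 ≤ G.nLevel v r)
    (hsum : ∑ i ∈ Finset.range (r + 1), G.nLevel v i = n) :
    (∑ u, (G.dist v u : ℚ)) ≤ ((n : ℚ) ^ 2 + 10 * n + 25) / 8 :=
  stmt_11_general G v r n hr h0 hlow hmid hsum
end

section
/- Let v be a vertex of eccentricity r in a connected graph G of order n, and suppose n_0 = 1, n_1 ≥ 4, n_i ≥ 4 for i ∈ {2,...,ℓ} ∪ {r−ℓ,...,r−1}, n_i ≥ 6 for i ∈ {ℓ+1,...,⌊3ℓ/2⌋} ∪ {r−⌊3ℓ/2⌋,...,r−ℓ−1}, and n_i ≥ 8 for ⌊3ℓ/2⌋+1 ≤ i ≤ r−⌊3ℓ/2⌋−1, where ℓ = 3 and Σ n_i = n. Then σ(v) = Σ i·n_i ≤ (n² + 34n + 289)/16. -/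
open SimpleGraph Finset

lemma gauss_q (m : ℕ) : ∑ i ∈ Finset.range m, (i:ℚ) = m*(m-1)/2 := by
  induction m with
  | zero => simp
  | succ k ih => rw [Finset.sum_range_succ, ih]; push_cast; ring

set_option maxHeartbeats 1000000 in
/-- Counting step for 4-connected triangulations (maximal face length `ℓ = 3`):
the level-size lower bounds imply `σ(v) ≤ (n² + 34n + 289)/16`. -/
theorem stmt_18 {V : Type*} [Fintype V] (G : SimpleGraph V) (hG : G.Connected)
    (v : V) (r n ℓ : ℕ) (hℓ : ℓ = 3) (hr : G.ecc v = r) (hn : Fintype.card V = n)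
    (h0 : G.nLevel v 0 = 1) (h1 : 4 ≤ G.nLevel v 1)
    (h4 : ∀ i : ℕ, (2 ≤ i ∧ i ≤ ℓ) ∨ (r - ℓ ≤ i ∧ i ≤ r - 1) → 4 ≤ G.nLevel v i)
    (h6 : ∀ i : ℕ, (ℓ + 1 ≤ i ∧ i ≤ 3 * ℓ / 2) ∨ (r - 3 * ℓ / 2 ≤ i ∧ i ≤ r - ℓ - 1) →
      6 ≤ G.nLevel v i)
    (h8 : ∀ i : ℕ, 3 * ℓ / 2 + 1 ≤ i → i ≤ r - 3 * ℓ / 2 - 1 → 8 ≤ G.nLevel v i)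
    (hsum : ∑ i ∈ Finset.range (r + 1), G.nLevel v i = n) :
    (∑ u, (G.dist v u : ℚ)) ≤ ((n : ℚ) ^ 2 + 34 * n + 289) / 16 := by
  subst hℓ
  set F : ℕ → ℚ := fun i => (G.nLevel v i : ℚ) with hF
  -- basic facts
  have hFnn : ∀ i, 0 ≤ F i := fun i => Nat.cast_nonneg _
  have hF0 : F 0 = 1 := by simp [hF, h0]
  have hF1 : (4:ℚ) ≤ F 1 := by simp only [hF]; exact_mod_cast h1
  have hF4 : ∀ i, (2 ≤ i ∧ i ≤ 3) ∨ (r - 3 ≤ i ∧ i ≤ r - 1) → (4:ℚ) ≤ F i := by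
    intro i hi; simp only [hF]; exact_mod_cast h4 i hi
  have hF6 : ∀ i, (4 ≤ i ∧ i ≤ 4) ∨ (r - 4 ≤ i ∧ i ≤ r - 4) → (6:ℚ) ≤ F i := by
    intro i hi; simp only [hF]; exact_mod_cast h6 i (by omega)
  have hF8 : ∀ i, 5 ≤ i → i ≤ r - 5 → (8:ℚ) ≤ F i := by
    intro i hi1 hi2; simp only [hF]; exact_mod_cast h8 i (by omega) (by omega)
  have hle : ∀ u, G.dist v u ≤ r := by
    intro u
    rw [← hr, SimpleGraph.ecc]
    exact Finset.le_sup (Finset.mem_univ u)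
  -- Step A
  have hA : (∑ u, (G.dist v u : ℚ)) = ∑ i ∈ Finset.range (r+1), (i : ℚ) * F i := by
    rw [← Finset.sum_fiberwise_of_maps_to (g := fun u => G.dist v u)
      (fun u _ => Finset.mem_range.mpr (Nat.lt_succ_of_le (hle u)))]
    refine Finset.sum_congr rfl fun i _ => ?_
    have : ∑ u ∈ Finset.univ.filter (fun u => G.dist v u = i), (G.dist v u : ℚ)
         = ∑ _u ∈ Finset.univ.filter (fun u => G.dist v u = i), (i:ℚ) := by
      refine Finset.sum_congr rfl fun u hu => ?_
      rw [(Finset.mem_filter.mp hu).2]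
    rw [this, Finset.sum_const, nsmul_eq_mul]
    simp [hF, SimpleGraph.nLevel, mul_comm]
  -- the complementary sum
  set S : ℚ := ∑ i ∈ Finset.range (r+1), ((r:ℚ) - i) * F i with hS
  have hB : (∑ i ∈ Finset.range (r+1), (i : ℚ) * F i) + S = (r:ℚ) * n := by
    rw [hS, ← Finset.sum_add_distrib]
    have : ∀ i ∈ Finset.range (r+1), (i:ℚ)*F i + ((r:ℚ)-i)*F i = (r:ℚ) * F i :=
      fun i _ => by ring
    rw [Finset.sum_congr rfl this, ← Finset.mul_sum]
    congr 1
    rw [hF]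
    rw [← Nat.cast_sum, hsum]
  -- Step C : S ≥ 4r² - 17r
  have hC : 4*(r:ℚ)^2 - 17*r ≤ S := by
    have hwnn : ∀ i ∈ Finset.range (r+1), 0 ≤ ((r:ℚ) - i) * F i := by
      intro i hi
      have : (i:ℚ) ≤ r := by exact_mod_cast Nat.lt_succ_iff.mp (Finset.mem_range.mp hi)
      exact mul_nonneg (by linarith) (hFnn i)
    rcases le_or_gt r 4 with hr4 | hr5
    · have hS0 : 0 ≤ S := Finset.sum_nonneg hwnn
      have : (r:ℚ) ≤ 4 := by exact_mod_cast hr4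
      nlinarith [Nat.cast_nonneg (α := ℚ) r]
    have hF4' : ∀ i, 2 ≤ i → i + 1 ≤ r → (4:ℚ) ≤ F i := by
      intro i hi1 hi2
      by_cases hA : i ≤ 3
      · exact hF4 i (Or.inl ⟨hi1, hA⟩)
      by_cases hB : r - 3 ≤ i
      · exact hF4 i (Or.inr ⟨hB, by omega⟩)
      by_cases hC : i = 4 ∨ i = r - 4
      · exact le_trans (by norm_num) (hF6 i (by omega))
      · exact le_trans (by norm_num) (hF8 i (by omega) (by omega))
    rcases le_or_gt r 9 with hr9 | hr10
    · -- 5 ≤ r ≤ 9 : finitely many cases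
      interval_cases r
      · simp only [hS, Finset.sum_range_succ, Finset.sum_range_zero]
        norm_num
        nlinarith [hF0, hF1, hF4' 2 (by norm_num) (by norm_num),
          hF4' 3 (by norm_num) (by norm_num), hF4' 4 (by norm_num) (by norm_num), hFnn 5]
      · simp only [hS, Finset.sum_range_succ, Finset.sum_range_zero]
        norm_num
        nlinarith [hF0, hF1, hF4' 2 (by norm_num) (by norm_num),
          hF4' 3 (by norm_num) (by norm_num), hF4' 4 (by norm_num) (by norm_num),
          hF4' 5 (by norm_num) (by norm_num), hFnn 6]
      · simp only [hS, Finset.sum_range_succ, Finset.sum_range_zero]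
        norm_num
        nlinarith [hF0, hF1, hF4' 2 (by norm_num) (by norm_num),
          hF4' 3 (by norm_num) (by norm_num), hF4' 4 (by norm_num) (by norm_num),
          hF4' 5 (by norm_num) (by norm_num), hF4' 6 (by norm_num) (by norm_num), hFnn 7]
      · simp only [hS, Finset.sum_range_succ, Finset.sum_range_zero]
        norm_num
        nlinarith [hF0, hF1, hF4' 2 (by norm_num) (by norm_num),
          hF4' 3 (by norm_num) (by norm_num), hF6 4 (by omega),
          hF4' 5 (by norm_num) (by norm_num), hF4' 6 (by norm_num) (by norm_num),
          hF4' 7 (by norm_num) (by norm_num), hFnn 8]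
      · simp only [hS, Finset.sum_range_succ, Finset.sum_range_zero]
        norm_num
        nlinarith [hF0, hF1, hF4' 2 (by norm_num) (by norm_num),
          hF4' 3 (by norm_num) (by norm_num), hF6 4 (by omega), hF6 5 (by omega),
          hF4' 6 (by norm_num) (by norm_num), hF4' 7 (by norm_num) (by norm_num),
          hF4' 8 (by norm_num) (by norm_num), hFnn 9]
    · -- r ≥ 10
      have hrq : (10:ℚ) ≤ (r:ℚ) := by exact_mod_cast hr10
      have hsplit : S = (∑ i ∈ Finset.range 5, ((r:ℚ) - i) * F i)
          + (∑ i ∈ Finset.Ico 5 (r-4), ((r:ℚ) - i) * F i)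
          + (∑ i ∈ Finset.Ico (r-4) (r+1), ((r:ℚ) - i) * F i) := by
        rw [hS, ← Finset.sum_range_add_sum_Ico _ (show 5 ≤ r+1 by omega),
          ← Finset.sum_Ico_consecutive _ (show 5 ≤ r-4 by omega)
            (show r-4 ≤ r+1 by omega), add_assoc]
      have hhead : 19*(r:ℚ) - 48 ≤ ∑ i ∈ Finset.range 5, ((r:ℚ) - i) * F i := by
        simp only [Finset.sum_range_succ, Finset.sum_range_zero]
        norm_num
        have e1 : ((r:ℚ)-1)*4 ≤ ((r:ℚ)-1)*F 1 :=
          mul_le_mul_of_nonneg_left hF1 (by linarith)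
        have e2 : ((r:ℚ)-2)*4 ≤ ((r:ℚ)-2)*F 2 :=
          mul_le_mul_of_nonneg_left (hF4 2 (by omega)) (by linarith)
        have e3 : ((r:ℚ)-3)*4 ≤ ((r:ℚ)-3)*F 3 :=
          mul_le_mul_of_nonneg_left (hF4 3 (by omega)) (by linarith)
        have e4 : ((r:ℚ)-4)*6 ≤ ((r:ℚ)-4)*F 4 :=
          mul_le_mul_of_nonneg_left (hF6 4 (by omega)) (by linarith)
        nlinarith [hF0]
      have hmid : 4*(r:ℚ)^2 - 36*r ≤ ∑ i ∈ Finset.Ico 5 (r-4), ((r:ℚ) - i) * F i := by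
        have step : ∀ i ∈ Finset.Ico 5 (r-4), ((r:ℚ)-i)*8 ≤ ((r:ℚ)-i)*F i := by
          intro i hi
          rw [Finset.mem_Ico] at hi
          have h8' := hF8 i hi.1 (by omega)
          have hir : (i:ℚ) ≤ r := by exact_mod_cast (show i ≤ r by omega)
          exact mul_le_mul_of_nonneg_left h8' (by linarith)
        have hval : ∑ i ∈ Finset.Ico 5 (r-4), ((r:ℚ)-i)*8 = 4*(r:ℚ)^2 - 36*r := by
          rw [Finset.sum_Ico_eq_sum_range]
          obtain ⟨m, hm⟩ : ∃ m, r = m + 9 := ⟨r-9, by omega⟩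
          subst hm
          have hms : m + 9 - 4 - 5 = m := by omega
          rw [hms]
          have : ∀ j ∈ Finset.range m, (((m+9:ℕ):ℚ) - ((5+j:ℕ):ℚ))*8
              = ((m:ℚ)+4)*8 - 8*(j:ℚ) := by
            intro j _; push_cast; ring
          rw [Finset.sum_congr rfl this, Finset.sum_sub_distrib, Finset.sum_const,
            ← Finset.mul_sum, gauss_q, Finset.card_range]
          push_cast
          ring
        rw [← hval]
        exact Finset.sum_le_sum step
      have htail : (48:ℚ) ≤ ∑ i ∈ Finset.Ico (r-4) (r+1), ((r:ℚ) - i) * F i := by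
        rw [Finset.sum_Ico_eq_sum_range, show r + 1 - (r-4) = 5 by omega]
        simp only [Finset.sum_range_succ, Finset.sum_range_zero]
        rw [show r - 4 + 0 = r - 4 by omega, show r - 4 + 1 = r - 3 by omega,
          show r - 4 + 2 = r - 2 by omega, show r - 4 + 3 = r - 1 by omega,
          show r - 4 + 4 = r by omega,
          Nat.cast_sub (show 4 ≤ r by omega), Nat.cast_sub (show 3 ≤ r by omega),
          Nat.cast_sub (show 2 ≤ r by omega), Nat.cast_sub (show 1 ≤ r by omega)]
        have b4 : (6:ℚ) ≤ F (r-4) := hF6 (r-4) (by omega)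
        have b3 : (4:ℚ) ≤ F (r-3) := hF4 (r-3) (by omega)
        have b2 : (4:ℚ) ≤ F (r-2) := hF4 (r-2) (by omega)
        have b1 : (4:ℚ) ≤ F (r-1) := hF4 (r-1) (by omega)
        have br : (0:ℚ) ≤ F r := hFnn r
        have t4 : ((r:ℚ) - ((r:ℚ)-4)) * F (r-4) = 4 * F (r-4) := by ring
        have t3 : ((r:ℚ) - ((r:ℚ)-3)) * F (r-3) = 3 * F (r-3) := by ring
        have t2 : ((r:ℚ) - ((r:ℚ)-2)) * F (r-2) = 2 * F (r-2) := by ring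
        have t1 : ((r:ℚ) - ((r:ℚ)-1)) * F (r-1) = 1 * F (r-1) := by ring
        have t0 : ((r:ℚ) - (r:ℚ)) * F r = 0 := by ring
        simp only [Nat.cast_ofNat, Nat.cast_one]
        rw [t4, t3, t2, t1, t0]
        linarith
      rw [hsplit]
      linarith [hhead, hmid, htail]
  -- combine
  have hn' : (0:ℚ) ≤ n := Nat.cast_nonneg n
  rw [hA]
  nlinarith [sq_nonneg ((n:ℚ) + 17 - 8*r)]
end
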